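/- Let a(t) be positive and decreasing with a(t) ≤ a₀, and n > 0. With P₂(z,t) the quadratic Taylor polynomial at n of e^{a(t)z^{3/2}}, for every z ≥ n and t ≥ 0 one has ∂_z P₂(z, t) ≤ (1 + 3 a₀ z^{1/2}) P₂(z, t), assuming n ≥ 1. -/

import Mathlib

/-!
Write `P₂ = e^{a n^{3/2}} q(z - n)` with `q(d) = 1 + b d + c d² / 2`, `b = (3/2) a √n` and
`c = (9/4) a² n + (3/4) a n^{-1/2}`, so that `∂_z P₂ = e^{a n^{3/2}} (b + c d)`. Put
`K = 3 a₀ √z`. Since `a √n ≤ a₀ √z` and `n^{-1/2} ≤ √n` for `n ≥ 1`, we get `b ≤ K` and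
`c ≤ (1 + K) b`; hence `b + c d ≤ K + (1 + K) b d ≤ (1 + K) q(d)` for `d ≥ 0`.
-/

noncomputable def P₂ (a : ℝ → ℝ) (n : ℝ) (z t : ℝ) : ℝ :=
  Real.exp (a t * n^((3:ℝ)/2))
    * (1 + (3/2) * a t * n^((1:ℝ)/2) * (z - n)
        + ((9/4) * (a t)^2 * n + (3/4) * a t * n^(-(1:ℝ)/2)) * (z - n)^2 / 2)

theorem hasDerivAt_quadratic_taylor (b c n z : ℝ) :
    HasDerivAt (fun z => 1 + b * (z - n) + c * (z - n) ^ 2 / 2) (b + c * (z - n)) z := by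
  have hlin : HasDerivAt (fun z : ℝ => z - n) 1 z := (hasDerivAt_id z).sub_const n
  have hsq : HasDerivAt (fun z : ℝ => c * (z - n) ^ 2 / 2) (c * (2 * (z - n)) / 2) z := by
    simpa using ((hlin.fun_pow 2).const_mul c).div_const 2
  exact (((hlin.const_mul b).const_add 1).add hsq).congr_deriv (by ring)

theorem hasDerivAt_P₂ (a : ℝ → ℝ) (n z t : ℝ) :
    HasDerivAt (fun z => P₂ a n z t)
      (Real.exp (a t * n ^ ((3:ℝ)/2)) * ((3/2) * a t * n ^ ((1:ℝ)/2)
        + ((9/4) * (a t) ^ 2 * n + (3/4) * a t * n ^ (-(1:ℝ)/2)) * (z - n))) z :=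
  (hasDerivAt_quadratic_taylor _ _ n z).const_mul _

theorem quadratic_taylor_deriv_le {b c d K : ℝ} (hb : 0 ≤ b) (hbK : b ≤ K) (hc : 0 ≤ c)
    (hcb : c ≤ (1 + K) * b) (hd : 0 ≤ d) :
    b + c * d ≤ (1 + K) * (1 + b * d + c * d ^ 2 / 2) := by
  have hcd : c * d ≤ (1 + K) * b * d := mul_le_mul_of_nonneg_right hcb hd
  have hquad : 0 ≤ (1 + K) * (c * d ^ 2 / 2) := by
    have : 0 ≤ 1 + K := by linarith
    positivity
  linarith

theorem second_taylor_coeff_le {u n v w : ℝ} (hu : 0 ≤ u) (hn : 0 ≤ n) (hv : v ≤ √n)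
    (huw : u * √n ≤ w) :
    9/4 * u ^ 2 * n + 3/4 * u * v ≤ (1 + 3 * w) * (3/2 * u * √n) := by
  have hsq := Real.sq_sqrt hn
  have hus : 0 ≤ u * √n := by positivity
  nlinarith [mul_le_mul_of_nonneg_left hv hu, mul_le_mul_of_nonneg_left huw hus]

theorem P2_deriv_le_general (a₀ : ℝ) (a : ℝ → ℝ)
    (hpos : ∀ t : ℝ, 0 ≤ t → 0 < a t ∧ a t ≤ a₀)
    (n : ℝ) (hn : 1 ≤ n) :
    ∀ z : ℝ, n ≤ z → ∀ t : ℝ, 0 ≤ t →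
      deriv (fun z => P₂ a n z t) z ≤ (1 + 3 * a₀ * Real.sqrt z) * P₂ a n z t := by
  intro z hz t ht
  obtain ⟨hu, hua⟩ := hpos t ht
  have hn0 : 0 ≤ n := by linarith
  have hinv : n ^ (-(1:ℝ)/2) ≤ √n := by
    rw [Real.sqrt_eq_rpow]
    exact Real.rpow_le_rpow_of_exponent_le hn (by norm_num)
  have huw : a t * √n ≤ a₀ * √z :=
    mul_le_mul hua (Real.sqrt_le_sqrt hz) (Real.sqrt_nonneg n) (by linarith)
  rw [(hasDerivAt_P₂ a n z t).deriv, P₂, mul_left_comm, ← Real.sqrt_eq_rpow]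
  gcongr
  apply quadratic_taylor_deriv_le (by positivity) _ (by positivity) _ (by linarith)
  · linarith [mul_nonneg hu.le (Real.sqrt_nonneg n)]
  · simpa only [mul_assoc] using second_taylor_coeff_le hu.le hn0 hinv huw

theorem P2_deriv_le (a₀ : ℝ) (ha₀ : 0 < a₀) (a : ℝ → ℝ)
    (hpos : ∀ t : ℝ, 0 ≤ t → 0 < a t ∧ a t ≤ a₀)
    (hdec : ∀ s t : ℝ, 0 ≤ s → s ≤ t → a t ≤ a s)
    (n : ℝ) (hn : 1 ≤ n) :
    ∀ z : ℝ, n ≤ z → ∀ t : ℝ, 0 ≤ t →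
      deriv (fun z => P₂ a n z t) z ≤ (1 + 3 * a₀ * Real.sqrt z) * P₂ a n z t :=
  P2_deriv_le_general a₀ a hpos n hn
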